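/- arXiv:1911.06286 — 4 statements merged into one kernel-verified Lean document; each statement's English description precedes it below -/
import Mathlib

section
/- Let α, β, γ, c₁, c₂, c₃ be positive real constants with α ≥ min(β, γ) and β > γ. Then there exists a constant c₄ > 0 such that for every TOL ∈ (0, e⁻¹) there exist a level L ∈ ℕ and positive integers M₀, M₁, …, M_L satisfying both c₁²·2^(−2αL) + Σ_{ℓ=0}^{L} c₂·2^(−βℓ)/M_ℓ ≤ TOL² and Σ_{ℓ=0}^{L} M_ℓ·c₃·2^(γℓ) ≤ c₄·TOL^(−2). -/
open Filter Finset

private lemma mlmc_geom_bound {r : ℝ} (h0 : 0 ≤ r) (h1 : r < 1) (n : ℕ) :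
    ∑ i ∈ Finset.range n, r ^ i ≤ (1 - r)⁻¹ := by
  have h2 : 0 < 1 - r := by linarith
  rw [geom_sum_eq (ne_of_lt h1)]
  rw [show (r ^ n - 1) / (r - 1) = (1 - r ^ n) / (1 - r) by
    rw [div_eq_div_iff (by linarith) (by linarith)]; ring]
  rw [inv_eq_one_div, div_le_div_iff₀ h2 h2]
  have : 0 ≤ r ^ n := pow_nonneg h0 n
  nlinarith

set_option maxHeartbeats 1000000 in
/-- MLMC complexity theorem, deterministic core, case `β > γ`. -/
theorem mlmc_complexity_beta_gt_gamma
    (α β γ c₁ c₂ c₃ : ℝ)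
    (hα : 0 < α) (hβ : 0 < β) (hγ : 0 < γ)
    (hc₁ : 0 < c₁) (hc₂ : 0 < c₂) (hc₃ : 0 < c₃)
    (hαmin : α ≥ min β γ) (hβγ : β > γ) :
    ∃ c₄ > (0 : ℝ), ∀ TOL : ℝ, 0 < TOL → TOL < Real.exp (-1) →
      ∃ (L : ℕ) (M : ℕ → ℕ),
        (∀ ℓ ≤ L, 0 < M ℓ) ∧
        c₁ ^ 2 * (2 : ℝ) ^ (-(2 * α * (L : ℝ)))
            + ∑ ℓ ∈ Finset.range (L + 1), c₂ * (2 : ℝ) ^ (-(β * (ℓ : ℝ))) / (M ℓ : ℝ)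
          ≤ TOL ^ 2 ∧
        ∑ ℓ ∈ Finset.range (L + 1), (M ℓ : ℝ) * c₃ * (2 : ℝ) ^ (γ * (ℓ : ℝ))
          ≤ c₄ * TOL ^ (-2 : ℝ) := by
  have h12 : (1:ℝ) < 2 := one_lt_two
  have hαγ : γ ≤ α := le_trans (le_of_eq (min_eq_right hβγ.le).symm) hαmin
  set ε : ℝ := (β - γ) / 2 with hεdef
  have hε : 0 < ε := by rw [hεdef]; linarith only [hβγ]
  set δ : ℝ := (β + γ) / 2 with hδdef
  have hδ : 0 < δ := by rw [hδdef]; linarith only [hβ, hγ]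
  set r : ℝ := (2:ℝ) ^ (-ε) with hrdef
  have hr0 : 0 < r := Real.rpow_pos_of_pos two_pos _
  have hr1 : r < 1 := Real.rpow_lt_one_of_one_lt_of_neg h12 (by linarith only [hε])
  have h1r : 0 < 1 - r := by linarith only [hr1]
  set S : ℝ := (1 - r)⁻¹ with hSdef
  have hS0 : 0 < S := inv_pos.mpr h1r
  have hlog2 : 0 < Real.log 2 := Real.log_pos h12
  have hs2 : 0 < Real.sqrt 2 := Real.sqrt_pos.mpr two_pos
  set C₂ : ℝ := (2:ℝ) ^ γ * (Real.sqrt 2 * c₁ + 1) with hC2def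
  have hC₂0 : 0 < C₂ := by
    have := Real.rpow_pos_of_pos (two_pos : (0:ℝ) < 2) γ
    positivity
  set l₀ : ℝ := Real.logb 2 (Real.sqrt 2 * c₁) with hl0def
  set C₁ : ℝ := (|l₀| + (Real.log 2)⁻¹) / α + 2 with hC1def
  have hC₁0 : 0 < C₁ := by
    have h1 : 0 ≤ |l₀| := abs_nonneg _
    have h2 : 0 < (Real.log 2)⁻¹ := inv_pos.mpr hlog2
    have : 0 < (|l₀| + (Real.log 2)⁻¹) / α := by positivity
    rw [hC1def]; linarith only [this]
  refine ⟨2 * c₂ * c₃ * S ^ 2 + c₃ * C₁ * C₂, by positivity, ?_⟩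
  intro TOL hT0 hTe
  have hT1 : TOL < 1 := lt_trans hTe (Real.exp_lt_one_iff.mpr (by norm_num))
  have hTinv : 1 ≤ TOL⁻¹ := (one_le_inv₀ hT0).mpr hT1.le
  have hTne : TOL ≠ 0 := ne_of_gt hT0
  have hTrw : TOL ^ (-2:ℝ) = (TOL ^ 2)⁻¹ := by
    rw [show (-2:ℝ) = -((2:ℕ):ℝ) by norm_num, Real.rpow_neg hT0.le, Real.rpow_natCast]
  set x : ℝ := Real.logb 2 (Real.sqrt 2 * c₁ / TOL) with hxdef
  set L : ℕ := ⌈x / α⌉₊ with hLdef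
  set A : ℝ := 2 * c₂ * S / TOL ^ 2 with hAdef
  have hA0 : 0 < A := by positivity
  set M : ℕ → ℕ := fun ℓ => ⌈A * (2:ℝ) ^ (-(δ * (ℓ:ℝ)))⌉₊ with hMdef
  have hMpos : ∀ ℓ : ℕ, 0 < M ℓ := fun ℓ => Nat.ceil_pos.mpr
    (by have := Real.rpow_pos_of_pos (two_pos : (0:ℝ) < 2) (-(δ * (ℓ:ℝ))); positivity)
  have hMlb : ∀ ℓ : ℕ, A * (2:ℝ) ^ (-(δ * (ℓ:ℝ))) ≤ (M ℓ : ℝ) := fun ℓ => Nat.le_ceil _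
  have hMub : ∀ ℓ : ℕ, (M ℓ : ℝ) ≤ A * (2:ℝ) ^ (-(δ * (ℓ:ℝ))) + 1 := fun ℓ =>
    le_of_lt (Nat.ceil_lt_add_one
      (by have := Real.rpow_pos_of_pos (two_pos : (0:ℝ) < 2) (-(δ * (ℓ:ℝ))); positivity))
  have hrpow : ∀ ℓ : ℕ, r ^ ℓ = (2:ℝ) ^ (-(ε * (ℓ:ℝ))) := by
    intro ℓ
    rw [hrdef, ← Real.rpow_natCast ((2:ℝ) ^ (-ε)) ℓ, ← Real.rpow_mul (by norm_num)]
    ring_nf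
  have hsc : 0 < Real.sqrt 2 * c₁ / TOL := by positivity
  have h2x : (2:ℝ) ^ x = Real.sqrt 2 * c₁ / TOL :=
    Real.rpow_logb two_pos (by norm_num) hsc
  -- bias bound
  set P : ℝ := (2:ℝ) ^ (α * (L:ℝ)) with hPdef
  have hP0 : 0 < P := Real.rpow_pos_of_pos two_pos _
  have hxL : x ≤ α * (L:ℝ) := by
    have h1 : x / α ≤ (L:ℝ) := Nat.le_ceil _
    calc x = α * (x / α) := by field_simp
    _ ≤ α * (L:ℝ) := mul_le_mul_of_nonneg_left h1 hα.le
  have hPP : Real.sqrt 2 * c₁ / TOL ≤ P := by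
    rw [← h2x, hPdef]
    exact Real.rpow_le_rpow_of_exponent_le h12.le hxL
  have hbias : c₁ ^ 2 * (2:ℝ) ^ (-(2 * α * (L:ℝ))) ≤ TOL ^ 2 / 2 := by
    have hrw : (2:ℝ) ^ (-(2 * α * (L:ℝ))) = (P ^ 2)⁻¹ := by
      rw [hPdef, ← Real.rpow_natCast ((2:ℝ) ^ (α * (L:ℝ))) 2, ← Real.rpow_mul (by norm_num),
        ← Real.rpow_neg (by norm_num)]
      ring_nf
    rw [hrw]
    have hsq2 : Real.sqrt 2 ^ 2 = 2 := Real.sq_sqrt (by norm_num)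
    have h1 : Real.sqrt 2 * c₁ ≤ P * TOL := by
      rw [div_le_iff₀ hT0] at hPP; exact hPP
    have h2 : (Real.sqrt 2 * c₁) ^ 2 ≤ (P * TOL) ^ 2 :=
      pow_le_pow_left₀ (by positivity) h1 2
    have h2' : 2 * c₁ ^ 2 ≤ P ^ 2 * TOL ^ 2 := by
      calc 2 * c₁ ^ 2 = (Real.sqrt 2 * c₁) ^ 2 := by rw [mul_pow, hsq2]
        _ ≤ (P * TOL) ^ 2 := h2
        _ = P ^ 2 * TOL ^ 2 := by rw [mul_pow]
    rw [mul_inv_le_iff₀ (by positivity)]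
    linarith only [h2']
  -- variance bound
  have hvar : ∑ ℓ ∈ Finset.range (L + 1), c₂ * (2:ℝ) ^ (-(β * (ℓ:ℝ))) / (M ℓ : ℝ)
      ≤ TOL ^ 2 / 2 := by
    have hterm : ∀ ℓ ∈ Finset.range (L + 1),
        c₂ * (2:ℝ) ^ (-(β * (ℓ:ℝ))) / (M ℓ : ℝ) ≤ (c₂ / A) * r ^ ℓ := by
      intro ℓ _
      have hd0 : 0 < A * (2:ℝ) ^ (-(δ * (ℓ:ℝ))) := by
        have := Real.rpow_pos_of_pos (two_pos : (0:ℝ) < 2) (-(δ * (ℓ:ℝ))); positivity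
      have h1 : c₂ * (2:ℝ) ^ (-(β * (ℓ:ℝ))) / (M ℓ : ℝ)
          ≤ c₂ * (2:ℝ) ^ (-(β * (ℓ:ℝ))) / (A * (2:ℝ) ^ (-(δ * (ℓ:ℝ)))) := by
        have hnum : 0 ≤ c₂ * (2:ℝ) ^ (-(β * (ℓ:ℝ))) := by
          have := Real.rpow_pos_of_pos (two_pos : (0:ℝ) < 2) (-(β * (ℓ:ℝ))); positivity
        exact div_le_div_of_nonneg_left hnum hd0 (hMlb ℓ)
      refine h1.trans (le_of_eq ?_)
      rw [hrpow ℓ]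
      have hsplit : (2:ℝ) ^ (-(β * (ℓ:ℝ)))
          = (2:ℝ) ^ (-(δ * (ℓ:ℝ))) * (2:ℝ) ^ (-(ε * (ℓ:ℝ))) := by
        rw [← Real.rpow_add (by norm_num)]
        congr 1
        rw [hδdef, hεdef]; ring
      rw [hsplit]
      have hd : (2:ℝ) ^ (-(δ * (ℓ:ℝ))) ≠ 0 := ne_of_gt (Real.rpow_pos_of_pos two_pos _)
      field_simp
    calc ∑ ℓ ∈ Finset.range (L + 1), c₂ * (2:ℝ) ^ (-(β * (ℓ:ℝ))) / (M ℓ : ℝ)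
        ≤ ∑ ℓ ∈ Finset.range (L + 1), (c₂ / A) * r ^ ℓ := Finset.sum_le_sum hterm
      _ = (c₂ / A) * ∑ ℓ ∈ Finset.range (L + 1), r ^ ℓ := by rw [Finset.mul_sum]
      _ ≤ (c₂ / A) * S := by
          have := mlmc_geom_bound hr0.le hr1 (L + 1)
          have hca : 0 ≤ c₂ / A := by positivity
          rw [hSdef]
          exact mul_le_mul_of_nonneg_left this hca
      _ = TOL ^ 2 / 2 := by
          rw [hAdef]
          field_simp
  -- L bounds
  have hLub : (L:ℝ) ≤ max (x / α) 0 + 1 := by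
    rcases le_or_gt (x / α) 0 with h | h
    · have hzero : L = 0 := by rw [hLdef]; exact Nat.ceil_eq_zero.mpr h
      rw [hzero]
      have hmr := le_max_right (x / α) 0
      push_cast
      linarith only [hmr]
    · have hub := Nat.ceil_lt_add_one h.le
      have hm : max (x / α) 0 = x / α := max_eq_left h.le
      rw [hm, hLdef]; exact le_of_lt hub
  have hmax0 : 0 ≤ max (x / α) 0 := le_max_right _ _
  -- 2 ^ (γ L) ≤ C₂ / TOL
  have hgL : (2:ℝ) ^ (γ * (L:ℝ)) ≤ C₂ / TOL := by
    have h3 : α * max (x / α) 0 = max x 0 := by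
      rcases le_or_gt x 0 with h | h
      · have hxa : x / α ≤ 0 := div_nonpos_of_nonpos_of_nonneg h hα.le
        rw [max_eq_right hxa, max_eq_right h]; ring
      · have hxa : 0 ≤ x / α := le_of_lt (div_pos h hα)
        rw [max_eq_left hxa, max_eq_left h.le]; field_simp
    have h4 : (2:ℝ) ^ (γ * (L:ℝ)) ≤ (2:ℝ) ^ (max x 0 + γ) := by
      apply Real.rpow_le_rpow_of_exponent_le h12.le
      have h1 : γ * (L:ℝ) ≤ γ * (max (x / α) 0 + 1) :=
        mul_le_mul_of_nonneg_left hLub hγ.le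
      have h2' : γ * max (x / α) 0 ≤ α * max (x / α) 0 :=
        mul_le_mul_of_nonneg_right hαγ hmax0
      have h2 : γ * (max (x / α) 0 + 1) ≤ α * max (x / α) 0 + γ := by
        linarith only [h2']
      rw [h3] at h2; linarith only [h1, h2]
    have h5 : (2:ℝ) ^ (max x 0 + γ) = (2:ℝ) ^ (max x 0) * (2:ℝ) ^ γ :=
      Real.rpow_add two_pos _ _
    have h6 : (2:ℝ) ^ (max x 0) ≤ (Real.sqrt 2 * c₁ + 1) / TOL := by
      rcases le_or_gt x 0 with h | h
      · rw [max_eq_right h, Real.rpow_zero, le_div_iff₀ hT0]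
        have := mul_pos hs2 hc₁
        linarith only [this, hT1]
      · rw [max_eq_left h.le, h2x, div_le_div_iff₀ hT0 hT0]
        have hp : 0 < Real.sqrt 2 * c₁ := mul_pos hs2 hc₁
        have := mul_le_mul_of_nonneg_right
          (show Real.sqrt 2 * c₁ ≤ Real.sqrt 2 * c₁ + 1 by linarith only []) hT0.le
        linarith only [this]
    calc (2:ℝ) ^ (γ * (L:ℝ)) ≤ (2:ℝ) ^ (max x 0) * (2:ℝ) ^ γ := by rw [← h5]; exact h4
      _ ≤ ((Real.sqrt 2 * c₁ + 1) / TOL) * (2:ℝ) ^ γ := by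
          have := Real.rpow_pos_of_pos (two_pos : (0:ℝ) < 2) γ
          exact mul_le_mul_of_nonneg_right h6 this.le
      _ = C₂ / TOL := by rw [hC2def]; ring
  -- L + 1 ≤ C₁ / TOL
  have hL1 : (L:ℝ) + 1 ≤ C₁ / TOL := by
    set B : ℝ := |l₀| + TOL⁻¹ / Real.log 2 with hBdef
    have hB0 : 0 ≤ B := by positivity
    have hxB : x ≤ B := by
      have hxsplit : x = l₀ - Real.logb 2 TOL := by
        rw [hxdef, Real.logb_div (by positivity) hTne]
      have hlt : -Real.logb 2 TOL ≤ TOL⁻¹ / Real.log 2 := by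
        have h2 : Real.log TOL⁻¹ ≤ TOL⁻¹ - 1 := Real.log_le_sub_one_of_pos (by positivity)
        have h1 : -Real.log TOL = Real.log TOL⁻¹ := (Real.log_inv TOL).symm
        rw [Real.logb, ← neg_div, h1]
        apply div_le_div_of_nonneg_right _ hlog2.le
        linarith only [h2, hTinv]
      have habs := le_abs_self l₀
      rw [hxsplit, hBdef]; linarith only [habs, hlt]
    have hmaxB : max (x / α) 0 ≤ B / α := by
      apply max_le
      · exact div_le_div_of_nonneg_right hxB hα.le
      · positivity
    have hstep : B / α + 2 ≤ C₁ * TOL⁻¹ := by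
      have key : B / α + 2 ≤ (|l₀| * TOL⁻¹ + TOL⁻¹ / Real.log 2) / α + 2 * TOL⁻¹ := by
        have h1 : |l₀| ≤ |l₀| * TOL⁻¹ := le_mul_of_one_le_right (abs_nonneg _) hTinv
        have h2 : B ≤ |l₀| * TOL⁻¹ + TOL⁻¹ / Real.log 2 := by rw [hBdef]; linarith
        have h3 : B / α ≤ (|l₀| * TOL⁻¹ + TOL⁻¹ / Real.log 2) / α :=
          div_le_div_of_nonneg_right h2 hα.le
        linarith only [h3, hTinv]
      refine key.trans (le_of_eq ?_)
      rw [hC1def]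
      field_simp
    rw [div_eq_mul_inv]
    calc (L:ℝ) + 1 ≤ max (x / α) 0 + 2 := by linarith only [hLub]
      _ ≤ B / α + 2 := by linarith only [hmaxB]
      _ ≤ C₁ * TOL⁻¹ := hstep
  -- cost bound
  have hcost : ∑ ℓ ∈ Finset.range (L + 1), (M ℓ : ℝ) * c₃ * (2:ℝ) ^ (γ * (ℓ:ℝ))
      ≤ (2 * c₂ * c₃ * S ^ 2 + c₃ * C₁ * C₂) * TOL ^ (-2:ℝ) := by
    have hterm : ∀ ℓ ∈ Finset.range (L + 1),
        (M ℓ : ℝ) * c₃ * (2:ℝ) ^ (γ * (ℓ:ℝ))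
          ≤ c₃ * A * r ^ ℓ + c₃ * (2:ℝ) ^ (γ * (ℓ:ℝ)) := by
      intro ℓ _
      have hg0 : 0 < (2:ℝ) ^ (γ * (ℓ:ℝ)) := Real.rpow_pos_of_pos two_pos _
      have h1 : (M ℓ : ℝ) * c₃ * (2:ℝ) ^ (γ * (ℓ:ℝ))
          ≤ (A * (2:ℝ) ^ (-(δ * (ℓ:ℝ))) + 1) * c₃ * (2:ℝ) ^ (γ * (ℓ:ℝ)) := by
        exact mul_le_mul_of_nonneg_right
          (mul_le_mul_of_nonneg_right (hMub ℓ) hc₃.le) hg0.le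
      refine h1.trans (le_of_eq ?_)
      have hmul : (2:ℝ) ^ (-(δ * (ℓ:ℝ))) * (2:ℝ) ^ (γ * (ℓ:ℝ)) = r ^ ℓ := by
        rw [hrpow ℓ, ← Real.rpow_add (by norm_num)]
        congr 1
        rw [hδdef, hεdef]; ring
      calc (A * (2:ℝ) ^ (-(δ * (ℓ:ℝ))) + 1) * c₃ * (2:ℝ) ^ (γ * (ℓ:ℝ))
          = c₃ * A * ((2:ℝ) ^ (-(δ * (ℓ:ℝ))) * (2:ℝ) ^ (γ * (ℓ:ℝ)))
            + c₃ * (2:ℝ) ^ (γ * (ℓ:ℝ)) := by ring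
        _ = c₃ * A * r ^ ℓ + c₃ * (2:ℝ) ^ (γ * (ℓ:ℝ)) := by rw [hmul]
    have hsum2 : ∑ ℓ ∈ Finset.range (L + 1), (2:ℝ) ^ (γ * (ℓ:ℝ))
        ≤ ((L:ℝ) + 1) * (2:ℝ) ^ (γ * (L:ℝ)) := by
      have hb : ∀ ℓ ∈ Finset.range (L + 1), (2:ℝ) ^ (γ * (ℓ:ℝ)) ≤ (2:ℝ) ^ (γ * (L:ℝ)) := by
        intro ℓ hl
        apply Real.rpow_le_rpow_of_exponent_le h12.le
        have : ℓ ≤ L := Nat.lt_succ_iff.mp (Finset.mem_range.mp hl)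
        have : (ℓ:ℝ) ≤ (L:ℝ) := Nat.cast_le.mpr this
        exact mul_le_mul_of_nonneg_left this hγ.le
      calc ∑ ℓ ∈ Finset.range (L + 1), (2:ℝ) ^ (γ * (ℓ:ℝ))
          ≤ ∑ _ℓ ∈ Finset.range (L + 1), (2:ℝ) ^ (γ * (L:ℝ)) := Finset.sum_le_sum hb
        _ = ((L:ℝ) + 1) * (2:ℝ) ^ (γ * (L:ℝ)) := by
            rw [Finset.sum_const, Finset.card_range]
            ring
    have hgsum : ∑ ℓ ∈ Finset.range (L + 1), r ^ ℓ ≤ S := by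
      rw [hSdef]; exact mlmc_geom_bound hr0.le hr1 (L + 1)
    calc ∑ ℓ ∈ Finset.range (L + 1), (M ℓ : ℝ) * c₃ * (2:ℝ) ^ (γ * (ℓ:ℝ))
        ≤ ∑ ℓ ∈ Finset.range (L + 1),
            (c₃ * A * r ^ ℓ + c₃ * (2:ℝ) ^ (γ * (ℓ:ℝ))) := Finset.sum_le_sum hterm
      _ = c₃ * A * (∑ ℓ ∈ Finset.range (L + 1), r ^ ℓ)
            + c₃ * ∑ ℓ ∈ Finset.range (L + 1), (2:ℝ) ^ (γ * (ℓ:ℝ)) := by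
          rw [Finset.sum_add_distrib, Finset.mul_sum, Finset.mul_sum]
      _ ≤ c₃ * A * S + c₃ * (((L:ℝ) + 1) * (2:ℝ) ^ (γ * (L:ℝ))) := by
          have h1 : c₃ * A * (∑ ℓ ∈ Finset.range (L + 1), r ^ ℓ) ≤ c₃ * A * S :=
            mul_le_mul_of_nonneg_left hgsum (by positivity)
          have h2 : c₃ * ∑ ℓ ∈ Finset.range (L + 1), (2:ℝ) ^ (γ * (ℓ:ℝ))
              ≤ c₃ * (((L:ℝ) + 1) * (2:ℝ) ^ (γ * (L:ℝ))) :=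
            mul_le_mul_of_nonneg_left hsum2 hc₃.le
          linarith only [h1, h2]
      _ ≤ c₃ * A * S + c₃ * ((C₁ / TOL) * (C₂ / TOL)) := by
          have h1 : ((L:ℝ) + 1) * (2:ℝ) ^ (γ * (L:ℝ)) ≤ (C₁ / TOL) * (C₂ / TOL) := by
            have hg0 : 0 ≤ (2:ℝ) ^ (γ * (L:ℝ)) := (Real.rpow_pos_of_pos two_pos _).le
            have hC1T : 0 ≤ C₁ / TOL := by positivity
            exact mul_le_mul hL1 hgL hg0 hC1T
          have := mul_le_mul_of_nonneg_left h1 hc₃.le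
          linarith only [this]
      _ = (2 * c₂ * c₃ * S ^ 2 + c₃ * C₁ * C₂) * TOL ^ (-2:ℝ) := by
          rw [hTrw, hAdef]
          field_simp
  refine ⟨L, M, fun ℓ _ => hMpos ℓ, by linarith only [hbias, hvar], hcost⟩
end

section
/- Let α, β, γ, c₁, c₂, c₃ be positive real constants with α ≥ min(β, γ) and β = γ. Then there exists a constant c₄ > 0 such that for every TOL ∈ (0, e⁻¹) there exist a level L ∈ ℕ and positive integers M₀, M₁, …, M_L satisfying both c₁²·2^(−2αL) + Σ_{ℓ=0}^{L} c₂·2^(−βℓ)/M_ℓ ≤ TOL² and Σ_{ℓ=0}^{L} M_ℓ·c₃·2^(γℓ) ≤ c₄·TOL^(−2)·(log TOL)². -/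
open Filter Finset

/-!
Take `L` to be the first level whose squared bias `c₁² 2^(-2αL)` is at most `TOL²/2`; then
`L = O(|log TOL|)` and `2^(γL) ≤ 2^(2αL) = O(TOL⁻²)`. Give each of the `L + 1` levels the share
`TOL² / (2(L + 1))` of the variance budget, i.e. `M_ℓ = ⌈2(L + 1) V_ℓ / TOL²⌉`. The cost is then at
most `Σ_ℓ (2(L + 1) V_ℓ W_ℓ / TOL² + W_ℓ)`, and since `β = γ` the product `V_ℓ W_ℓ = c₂ c₃` does not
depend on `ℓ`, so the cost is `O((L + 1)² TOL⁻²) = O(TOL⁻² (log TOL)²)`.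
-/

lemma one_le_neg_log_of_lt_exp_neg_one {t : ℝ} (ht : 0 < t) (hte : t < Real.exp (-1)) :
    1 ≤ -Real.log t := by
  have : Real.log t < -1 := (Real.log_lt_iff_lt_exp ht).2 hte
  linarith

lemma exists_nat_pow_ge_le_mul {r y : ℝ} (hr : 1 < r) (hy : 1 ≤ y) :
    ∃ L : ℕ, y ≤ r ^ L ∧ r ^ L ≤ r * y ∧ (L : ℝ) ≤ Real.log y / Real.log r + 1 := by
  obtain ⟨n, hny, hyn⟩ := exists_nat_pow_near hy hr
  refine ⟨n + 1, hyn.le, by rw [pow_succ']; gcongr, ?_⟩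
  have hlog : n * Real.log r ≤ Real.log y := by
    rw [← Real.log_pow]
    exact Real.log_le_log (by positivity) hny
  have : (n : ℝ) ≤ Real.log y / Real.log r := (le_div_iff₀ (Real.log_pos hr)).2 hlog
  push_cast
  linarith

lemma exists_level_bias_le {α : ℝ} (hα : 0 < α) (c₁ : ℝ) :
    ∃ A > (0 : ℝ), ∃ B > (0 : ℝ), ∀ t : ℝ, 0 < t → t < Real.exp (-1) →
      ∃ L : ℕ, c₁ ^ 2 * (2 : ℝ) ^ (-(2 * α * (L : ℝ))) ≤ t ^ 2 / 2 ∧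
        (2 : ℝ) ^ (2 * α * (L : ℝ)) ≤ B / t ^ 2 ∧ (L : ℝ) + 1 ≤ A * -Real.log t := by
  set r : ℝ := 2 ^ (2 * α)
  have hr : 1 < r := Real.one_lt_rpow one_lt_two (by positivity)
  set D := 2 * c₁ ^ 2 + 1
  have hD : 1 ≤ D := by simp only [D]; nlinarith [sq_nonneg c₁]
  have hlogD := Real.log_nonneg hD
  have hlogr := Real.log_pos hr
  refine ⟨(Real.log D + 2) / Real.log r + 2, by positivity, r * D, by positivity,
    fun t ht hte => ?_⟩
  have hU := one_le_neg_log_of_lt_exp_neg_one ht hte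
  have ht1 : t ^ 2 ≤ 1 := by
    have : t < 1 := (Real.log_neg_iff ht).1 (by linarith)
    nlinarith
  obtain ⟨L, hlow, hup, hL⟩ := exists_nat_pow_ge_le_mul hr
    ((one_le_div (by positivity)).2 (ht1.trans hD))
  have hpow : (2 : ℝ) ^ (2 * α * (L : ℝ)) = r ^ L := by
    rw [Real.rpow_mul (by norm_num), Real.rpow_natCast]
  refine ⟨L, ?_, ?_, ?_⟩
  · rw [Real.rpow_neg (by norm_num), hpow]
    calc c₁ ^ 2 * (r ^ L)⁻¹ ≤ c₁ ^ 2 * (D / t ^ 2)⁻¹ := by gcongr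
      _ ≤ t ^ 2 / 2 := by
        rw [inv_div, mul_div_assoc', div_le_div_iff₀ (by positivity) two_pos]
        nlinarith [sq_nonneg t]
  · rw [hpow, mul_div_assoc]
    exact hup
  · rw [Real.log_div (by positivity) (by positivity), Real.log_pow] at hL
    have : Real.log D - 2 * Real.log t ≤ (Real.log D + 2) * -Real.log t := by nlinarith
    calc (L : ℝ) + 1 ≤ (Real.log D + 2) * -Real.log t / Real.log r + 2 * -Real.log t := by
          push_cast at hL
          linarith [div_le_div_of_nonneg_right this hlogr.le]
      _ = _ := by ring

/-- Splits the variance budget `ε` equally among `N` levels: a level of variance `v` gets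
`⌈N v / ε⌉` samples. -/
noncomputable def sampleSize (N : ℕ) (ε v : ℝ) : ℕ := ⌈N * v / ε⌉₊

lemma sampleSize_pos {N : ℕ} {ε v : ℝ} (hN : 0 < N) (hε : 0 < ε) (hv : 0 < v) :
    0 < sampleSize N ε v :=
  Nat.ceil_pos.2 (by positivity)

lemma div_sampleSize_le {N : ℕ} {ε v : ℝ} (hN : 0 < N) (hε : 0 < ε) (hv : 0 < v) :
    v / sampleSize N ε v ≤ ε / N := by
  calc v / sampleSize N ε v ≤ v / (N * v / ε) := by
        gcongr
        exact Nat.le_ceil _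
    _ = ε / N := by field_simp

lemma sum_div_sampleSize_le {N : ℕ} {ε : ℝ} (hε : 0 < ε) {v : ℕ → ℝ} (hv : ∀ ℓ, 0 < v ℓ) :
    ∑ ℓ ∈ range N, v ℓ / sampleSize N ε (v ℓ) ≤ ε := by
  rcases N.eq_zero_or_pos with rfl | hN
  · simpa using hε.le
  calc ∑ ℓ ∈ range N, v ℓ / sampleSize N ε (v ℓ) ≤ ∑ _ℓ ∈ range N, ε / N :=
        sum_le_sum fun ℓ _ => div_sampleSize_le hN hε (hv ℓ)
    _ = ε := by rw [sum_const, card_range, nsmul_eq_mul]; field_simp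

lemma sampleSize_mul_le {N : ℕ} {ε v w κ : ℝ} (hε : 0 < ε) (hv : 0 ≤ v) (hw : 0 ≤ w)
    (hvw : v * w ≤ κ) : sampleSize N ε v * w ≤ N * κ / ε + w := by
  calc sampleSize N ε v * w ≤ (N * v / ε + 1) * w := by
        gcongr
        exact (Nat.ceil_lt_add_one (by positivity)).le
    _ = N * (v * w) / ε + w := by ring
    _ ≤ N * κ / ε + w := by gcongr

lemma sum_sampleSize_mul_le {N : ℕ} {ε κ W : ℝ} (hε : 0 < ε) {v w : ℕ → ℝ}
    (hv : ∀ ℓ, 0 ≤ v ℓ) (hw : ∀ ℓ, 0 ≤ w ℓ) (hvw : ∀ ℓ, v ℓ * w ℓ ≤ κ)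
    (hW : ∀ ℓ ∈ range N, w ℓ ≤ W) :
    ∑ ℓ ∈ range N, (sampleSize N ε (v ℓ) : ℝ) * w ℓ ≤ N * (N * κ / ε + W) := by
  calc ∑ ℓ ∈ range N, (sampleSize N ε (v ℓ) : ℝ) * w ℓ
      ≤ ∑ _ℓ ∈ range N, (N * κ / ε + W) := sum_le_sum fun ℓ hℓ =>
        (sampleSize_mul_le hε (hv ℓ) (hw ℓ) (hvw ℓ)).trans (by linarith [hW ℓ hℓ])
    _ = N * (N * κ / ε + W) := by rw [sum_const, card_range, nsmul_eq_mul]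

lemma mul_div_add_div_le_mul_log_sq {N A κ b t : ℝ} (hκ : 0 ≤ κ) (hb : 0 ≤ b) (ht : 0 < t)
    (hU : 1 ≤ -Real.log t) (hN₀ : 0 ≤ N) (hN : N ≤ A * -Real.log t) :
    N * (N * κ / (t ^ 2 / 2) + b / t ^ 2)
      ≤ (2 * κ * A ^ 2 + b * A) * t ^ (-2 : ℝ) * Real.log t ^ 2 := by
  have hA : 0 ≤ A := nonneg_of_mul_nonneg_left (hN₀.trans hN) (by linarith)
  have hsq : N ^ 2 ≤ A ^ 2 * (-Real.log t) ^ 2 := by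
    rw [← mul_pow]; gcongr
  have hlin : N ≤ A * (-Real.log t) ^ 2 := hN.trans (by nlinarith)
  calc N * (N * κ / (t ^ 2 / 2) + b / t ^ 2) = (2 * κ * N ^ 2 + b * N) / t ^ 2 := by
        field_simp
    _ ≤ (2 * κ * A ^ 2 + b * A) * (-Real.log t) ^ 2 / t ^ 2 := by
        gcongr
        nlinarith [mul_le_mul_of_nonneg_left hsq (by positivity : 0 ≤ 2 * κ),
          mul_le_mul_of_nonneg_left hlin hb]
    _ = _ := by rw [Real.rpow_neg ht.le, Real.rpow_two, neg_sq]; ring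

theorem mlmc_complexity_beta_eq_gamma_general
    (α β γ c₁ c₂ c₃ : ℝ)
    (hα : 0 < α)
    (hc₂ : 0 < c₂) (hc₃ : 0 < c₃)
    (hαmin : α ≥ min β γ) (hβγ : β = γ) :
    ∃ c₄ > (0 : ℝ), ∀ TOL : ℝ, 0 < TOL → TOL < Real.exp (-1) →
      ∃ (L : ℕ) (M : ℕ → ℕ),
        (∀ ℓ ≤ L, 0 < M ℓ) ∧
        c₁ ^ 2 * (2 : ℝ) ^ (-(2 * α * (L : ℝ)))
            + ∑ ℓ ∈ Finset.range (L + 1), c₂ * (2 : ℝ) ^ (-(β * (ℓ : ℝ))) / (M ℓ : ℝ)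
          ≤ TOL ^ 2 ∧
        ∑ ℓ ∈ Finset.range (L + 1), (M ℓ : ℝ) * c₃ * (2 : ℝ) ^ (γ * (ℓ : ℝ))
          ≤ c₄ * TOL ^ (-2 : ℝ) * (Real.log TOL) ^ 2 := by
  subst hβγ
  have hβα : β ≤ α := by simpa using hαmin
  obtain ⟨A, hA, B, hB, hlevel⟩ := exists_level_bias_le hα c₁
  refine ⟨2 * (c₂ * c₃) * A ^ 2 + c₃ * B * A, by positivity, fun t ht hte => ?_⟩
  obtain ⟨L, hbias, htop, hLA⟩ := hlevel t ht hte
  set v : ℕ → ℝ := fun ℓ => c₂ * (2 : ℝ) ^ (-(β * (ℓ : ℝ)))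
  set w : ℕ → ℝ := fun ℓ => c₃ * (2 : ℝ) ^ (β * (ℓ : ℝ))
  have hv (ℓ : ℕ) : 0 < v ℓ := by positivity
  have hvw (ℓ : ℕ) : v ℓ * w ℓ = c₂ * c₃ := by
    have := (Real.rpow_pos_of_pos two_pos (β * ℓ)).ne'
    simp only [v, w, Real.rpow_neg zero_le_two]
    field_simp
  have hW : ∀ ℓ ∈ range (L + 1), w ℓ ≤ c₃ * B / t ^ 2 := fun ℓ hℓ => by
    have hℓL : (ℓ : ℝ) ≤ L := by exact_mod_cast Nat.lt_succ_iff.1 (mem_range.1 hℓ)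
    have hβℓ : β * ℓ ≤ 2 * α * L := by nlinarith [ℓ.cast_nonneg (α := ℝ)]
    rw [mul_div_assoc]
    exact mul_le_mul_of_nonneg_left
      ((Real.rpow_le_rpow_of_exponent_le one_le_two hβℓ).trans htop) hc₃.le
  have hcost := sum_sampleSize_mul_le (ε := t ^ 2 / 2) (by positivity) (fun ℓ => (hv ℓ).le)
    (fun ℓ => by positivity) (fun ℓ => (hvw ℓ).le) hW
  refine ⟨L, fun ℓ => sampleSize (L + 1) (t ^ 2 / 2) (v ℓ),
    fun ℓ _ => sampleSize_pos L.succ_pos (by positivity) (hv ℓ), ?_, ?_⟩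
  · linarith [sum_div_sampleSize_le (N := L + 1) (ε := t ^ 2 / 2) (by positivity) hv]
  · refine (sum_congr rfl fun ℓ _ => mul_assoc _ _ _).trans_le (hcost.trans ?_)
    exact mul_div_add_div_le_mul_log_sq (by positivity) (by positivity) ht
      (one_le_neg_log_of_lt_exp_neg_one ht hte) (by positivity) (by push_cast; exact hLA)

/-- MLMC complexity theorem, deterministic core, case `β = γ`. -/
theorem mlmc_complexity_beta_eq_gamma
    (α β γ c₁ c₂ c₃ : ℝ)
    (hα : 0 < α) (hβ : 0 < β) (hγ : 0 < γ)
    (hc₁ : 0 < c₁) (hc₂ : 0 < c₂) (hc₃ : 0 < c₃)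
    (hαmin : α ≥ min β γ) (hβγ : β = γ) :
    ∃ c₄ > (0 : ℝ), ∀ TOL : ℝ, 0 < TOL → TOL < Real.exp (-1) →
      ∃ (L : ℕ) (M : ℕ → ℕ),
        (∀ ℓ ≤ L, 0 < M ℓ) ∧
        c₁ ^ 2 * (2 : ℝ) ^ (-(2 * α * (L : ℝ)))
            + ∑ ℓ ∈ Finset.range (L + 1), c₂ * (2 : ℝ) ^ (-(β * (ℓ : ℝ))) / (M ℓ : ℝ)
          ≤ TOL ^ 2 ∧
        ∑ ℓ ∈ Finset.range (L + 1), (M ℓ : ℝ) * c₃ * (2 : ℝ) ^ (γ * (ℓ : ℝ))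
          ≤ c₄ * TOL ^ (-2 : ℝ) * (Real.log TOL) ^ 2 :=
  mlmc_complexity_beta_eq_gamma_general α β γ c₁ c₂ c₃ hα hc₂ hc₃ hαmin hβγ
end

section
/- Let δ ∈ [0,1), let 0 < c₁ ≤ c₂ and d₁ > 0, and let (Y_t)_{t∈(0,t₀)} be a family of real random variables with finite fourth moments such that for all t ∈ (0,t₀): |E[Y_t]| ≤ d₁·t, c₁·t^(1+δ) ≤ E[Y_t²] ≤ c₂·t^(1+δ), E[|Y_t|³] ≤ c₂·t^(2δ+1), and c₁·t^(3δ+1) ≤ E[Y_t⁴] ≤ c₂·t^(3δ+1). Then there exist a constant C > 0 and t₁ ∈ (0,t₀] such that the kurtosis κ_t := E[(Y_t − E[Y_t])⁴] / (Var[Y_t])² satisfies κ_t ≤ C·t^(δ−1) for all t ∈ (0,t₁); i.e., κ_t = O(t^(δ−1)) as t → 0⁺. -/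
/-!
The mean is `O(t)`, so its square is `o(t^(1+δ))` because `δ < 1`; for small `t` the variance
`E[Y²] - E[Y]²` is therefore at least `c₁ t^(1+δ) / 2`. The central fourth moment is at most
`8 (E[Y⁴] + E[Y]⁴) = O(t^(3δ+1))`, and `t^(3δ+1) / t^(2(1+δ)) = t^(δ-1)`.
-/

open MeasureTheory ProbabilityTheory Set Filter Topology

lemma sub_pow_four_le (a c : ℝ) : (a - c) ^ 4 ≤ 8 * a ^ 4 + 8 * c ^ 4 := by
  nlinarith [sq_nonneg (a + c), sq_nonneg (a ^ 2 - c ^ 2),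
    sq_nonneg ((a + c) ^ 2 - 2 * (a ^ 2 + c ^ 2))]

section Moments

variable {Ω : Type*} [MeasurableSpace Ω] {P : Measure Ω} {f : Ω → ℝ}

lemma MeasureTheory.MemLp.integrable_pow_four [IsFiniteMeasure P] (hf : MemLp f 4 P) :
    Integrable (fun ω ↦ f ω ^ 4) P := by
  simpa [Real.norm_eq_abs, Even.pow_abs ⟨2, rfl⟩] using
    (hf : MemLp f ((4 : ℕ) : ENNReal) P).integrable_norm_pow'

lemma integral_sub_pow_four_le [IsProbabilityMeasure P] (hf : MemLp f 4 P) (c : ℝ) :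
    ∫ ω, (f ω - c) ^ 4 ∂P ≤ 8 * ∫ ω, f ω ^ 4 ∂P + 8 * c ^ 4 := by
  have hf4 := hf.integrable_pow_four
  calc ∫ ω, (f ω - c) ^ 4 ∂P ≤ ∫ ω, (8 * f ω ^ 4 + 8 * c ^ 4) ∂P :=
        integral_mono (hf.sub (memLp_const c)).integrable_pow_four
          ((hf4.const_mul 8).add (integrable_const _)) fun ω ↦ sub_pow_four_le (f ω) c
    _ = 8 * ∫ ω, f ω ^ 4 ∂P + 8 * c ^ 4 := by
        rw [integral_add (hf4.const_mul 8) (integrable_const _), integral_const_mul]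
        simp

lemma le_variance_of_le_integral_sq [IsProbabilityMeasure P] (hf : MemLp f 2 P) {a b : ℝ}
    (ha : a ≤ ∫ ω, f ω ^ 2 ∂P) (hb : (∫ ω, f ω ∂P) ^ 2 ≤ b) : a - b ≤ variance f P := by
  rw [variance_eq_sub hf]
  simp only [Pi.pow_apply]
  linarith

end Moments

lemma exists_forall_Ioo_of_eventually_nhdsGT {p : ℝ → Prop} {t₀ : ℝ} (ht₀ : 0 < t₀)
    (h : ∀ᶠ t in 𝓝[>] 0, p t) : ∃ t₁, 0 < t₁ ∧ t₁ ≤ t₀ ∧ ∀ t, 0 < t → t < t₁ → p t := by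
  obtain ⟨u, hu, hsub⟩ := mem_nhdsGT_iff_exists_Ioo_subset.mp h
  exact ⟨min t₀ u, lt_min ht₀ hu, min_le_left _ _,
    fun t ht htu ↦ hsub ⟨ht, htu.trans_le (min_le_right _ _)⟩⟩

lemma eventually_mul_sq_le_mul_rpow {δ : ℝ} (hδ : δ < 1) (a : ℝ) {b : ℝ} (hb : 0 < b) :
    ∀ᶠ t in 𝓝[>] (0 : ℝ), a * t ^ 2 ≤ b * t ^ (1 + δ) := by
  have hlim : Tendsto (fun t : ℝ ↦ a * t ^ (1 - δ)) (𝓝[>] 0) (𝓝 0) := by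
    have := ((Real.continuous_rpow_const (sub_nonneg.mpr hδ.le)).tendsto 0).const_mul a
    simpa [Real.zero_rpow (sub_ne_zero.mpr hδ.ne')] using this.mono_left nhdsWithin_le_nhds
  filter_upwards [self_mem_nhdsWithin, hlim.eventually (ge_mem_nhds hb)] with t (ht : 0 < t) hle
  calc a * t ^ 2 = a * t ^ (1 - δ) * t ^ (1 + δ) := by
        rw [mul_assoc, ← Real.rpow_add ht, ← Real.rpow_natCast]; norm_num
    _ ≤ b * t ^ (1 + δ) := by gcongr

lemma rpow_div_rpow_sq {t : ℝ} (ht : 0 < t) (δ : ℝ) :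
    t ^ (3 * δ + 1) / (t ^ (1 + δ)) ^ 2 = t ^ (δ - 1) := by
  rw [← Real.rpow_natCast, ← Real.rpow_mul ht.le, ← Real.rpow_sub ht]
  norm_num; ring_nf

theorem mlmc_is_kurtosis_rate_general
    {Ω : Type*} [MeasurableSpace Ω] (P : Measure Ω) [IsProbabilityMeasure P]
    (δ : ℝ) (hδ1 : δ < 1)
    (c₁ c₂ d₁ t₀ : ℝ) (hc₁ : 0 < c₁) (hc₁₂ : c₁ ≤ c₂) (ht₀ : 0 < t₀)
    (Y : ℝ → Ω → ℝ)
    (hL4 : ∀ t ∈ Ioo (0 : ℝ) t₀, MemLp (Y t) 4 P)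
    (hmean : ∀ t ∈ Ioo (0 : ℝ) t₀, |∫ ω, Y t ω ∂P| ≤ d₁ * t)
    (hm2_lb : ∀ t ∈ Ioo (0 : ℝ) t₀, c₁ * t ^ (1 + δ) ≤ ∫ ω, (Y t ω) ^ 2 ∂P)
    (hm4_ub : ∀ t ∈ Ioo (0 : ℝ) t₀, ∫ ω, (Y t ω) ^ 4 ∂P ≤ c₂ * t ^ (3 * δ + 1)) :
    ∃ C : ℝ, 0 < C ∧ ∃ t₁ : ℝ, 0 < t₁ ∧ t₁ ≤ t₀ ∧ ∀ t : ℝ, 0 < t → t < t₁ →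
      (∫ ω, (Y t ω - ∫ x, Y t x ∂P) ^ 4 ∂P) / (variance (Y t) P) ^ 2
        ≤ C * t ^ (δ - 1) := by
  have hc₂ : 0 < c₂ := hc₁.trans_le hc₁₂
  refine ⟨32 * (c₂ + d₁ ^ 4) / c₁ ^ 2, by positivity,
    exists_forall_Ioo_of_eventually_nhdsGT ht₀ ?_⟩
  filter_upwards [Ioo_mem_nhdsGT ht₀, Ioo_mem_nhdsGT one_pos,
    eventually_mul_sq_le_mul_rpow hδ1 (d₁ ^ 2) (half_pos hc₁)] with t ht ht1 hsmall
  have htpos : 0 < t := ht.1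
  set m := ∫ ω, Y t ω ∂P
  have hm : |m| ≤ d₁ * t := hmean t ht
  have hvar : c₁ / 2 * t ^ (1 + δ) ≤ variance (Y t) P := by
    have hm2 : m ^ 2 ≤ d₁ ^ 2 * t ^ 2 := by
      rw [← mul_pow, ← sq_abs]; exact pow_le_pow_left₀ (abs_nonneg m) hm 2
    have := le_variance_of_le_integral_sq ((hL4 t ht).mono_exponent (by norm_num))
      (hm2_lb t ht) (hm2.trans hsmall)
    linarith
  have hcentral : ∫ ω, (Y t ω - m) ^ 4 ∂P ≤ 8 * (c₂ + d₁ ^ 4) * t ^ (3 * δ + 1) := by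
    have hm4 : m ^ 4 ≤ d₁ ^ 4 * t ^ (3 * δ + 1) := calc
      m ^ 4 ≤ (d₁ * t) ^ 4 := by
        simpa only [Even.pow_abs ⟨2, rfl⟩] using pow_le_pow_left₀ (abs_nonneg m) hm 4
      _ = d₁ ^ 4 * t ^ ((4 : ℕ) : ℝ) := by rw [Real.rpow_natCast]; ring
      _ ≤ d₁ ^ 4 * t ^ (3 * δ + 1) := mul_le_mul_of_nonneg_left
        (Real.rpow_le_rpow_of_exponent_ge htpos ht1.2.le (by push_cast; linarith)) (by positivity)
    linarith [integral_sub_pow_four_le (hL4 t ht) m, hm4_ub t ht]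
  calc _ ≤ 8 * (c₂ + d₁ ^ 4) * t ^ (3 * δ + 1) / (c₁ / 2 * t ^ (1 + δ)) ^ 2 :=
        div_le_div₀ (by positivity) hcentral (by positivity) (by gcongr)
    _ = 32 * (c₂ + d₁ ^ 4) / c₁ ^ 2 * t ^ (δ - 1) := by
        rw [← rpow_div_rpow_sq htpos]
        field_simp
        ring

/-- Abstract core of the kurtosis reduction of MLMC with importance sampling:
under first, second, third and fourth moment scalings in the time step `t`,
the kurtosis of `Y_t` is `O(t^(δ-1))` as `t → 0⁺`. -/
theorem mlmc_is_kurtosis_rate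
    {Ω : Type*} [MeasurableSpace Ω] (P : Measure Ω) [IsProbabilityMeasure P]
    (δ : ℝ) (hδ0 : 0 ≤ δ) (hδ1 : δ < 1)
    (c₁ c₂ d₁ t₀ : ℝ) (hc₁ : 0 < c₁) (hc₁₂ : c₁ ≤ c₂) (hd₁ : 0 < d₁) (ht₀ : 0 < t₀)
    (Y : ℝ → Ω → ℝ)
    (hL4 : ∀ t ∈ Ioo (0 : ℝ) t₀, MemLp (Y t) 4 P)
    (hmean : ∀ t ∈ Ioo (0 : ℝ) t₀, |∫ ω, Y t ω ∂P| ≤ d₁ * t)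
    (hm2_lb : ∀ t ∈ Ioo (0 : ℝ) t₀, c₁ * t ^ (1 + δ) ≤ ∫ ω, (Y t ω) ^ 2 ∂P)
    (hm2_ub : ∀ t ∈ Ioo (0 : ℝ) t₀, ∫ ω, (Y t ω) ^ 2 ∂P ≤ c₂ * t ^ (1 + δ))
    (hm3_ub : ∀ t ∈ Ioo (0 : ℝ) t₀, ∫ ω, |Y t ω| ^ 3 ∂P ≤ c₂ * t ^ (2 * δ + 1))
    (hm4_lb : ∀ t ∈ Ioo (0 : ℝ) t₀, c₁ * t ^ (3 * δ + 1) ≤ ∫ ω, (Y t ω) ^ 4 ∂P)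
    (hm4_ub : ∀ t ∈ Ioo (0 : ℝ) t₀, ∫ ω, (Y t ω) ^ 4 ∂P ≤ c₂ * t ^ (3 * δ + 1)) :
    ∃ C : ℝ, 0 < C ∧ ∃ t₁ : ℝ, 0 < t₁ ∧ t₁ ≤ t₀ ∧ ∀ t : ℝ, 0 < t → t < t₁ →
      (∫ ω, (Y t ω - ∫ x, Y t x ∂P) ^ 4 ∂P) / (variance (Y t) P) ^ 2
        ≤ C * t ^ (δ - 1) :=
  mlmc_is_kurtosis_rate_general P δ hδ1 c₁ c₂ d₁ t₀ hc₁ hc₁₂ ht₀ Y hL4 hmean hm2_lb hm4_ub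
end

section
/- Fix a > 0, a real p ≥ 1, and δ ∈ [0,1). For t ∈ (0,1), let N_t be a Poisson random variable with mean t^(1−δ)·a, and define the likelihood ratio L_t = e^((t^(1−δ)−t)·a) · t^(δ·N_t). Then, as t → 0⁺, E[N_t^p · L_t^p · 1_{N_t ≥ 1}] = t^((p−1)δ+1) · a · e^(p(t^(1−δ)−t)·a) · e^(−t^(1−δ)·a) · (1 + o(1)); that is, the ratio of the left-hand side to t^((p−1)δ+1) · a · e^(p(t^(1−δ)−t)·a) · e^(−t^(1−δ)·a) tends to 1 as t → 0⁺. -/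
open Filter Real Topology
open scoped Nat

/-! With `u = t^((p-1)δ+1) · a`, the factors combine as
`(e^c t^(δk))^p (t^(1-δ) a)^k = e^(pc) u^k`, so the moment equals
`e^(p(t^(1-δ)-t)a) e^(-t^(1-δ)a) ∑_{k≥1} k^p u^k / k!`, and `u → 0⁺` as `t → 0⁺`.
It remains that this series is `u + O(u²)`: its `k = 1` term is `u`, and since
`k^p ≤ (2^p)^k` the other terms add up to at most `u² e^(2^p)` when `u ≤ 1`. -/

theorem natCast_rpow_le_two_rpow_pow {p : ℝ} (hp : 0 ≤ p) (k : ℕ) :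
    (k : ℝ) ^ p ≤ ((2 : ℝ) ^ p) ^ k :=
  calc (k : ℝ) ^ p ≤ ((2 : ℝ) ^ k) ^ p := by gcongr; exact_mod_cast k.lt_two_pow_self.le
    _ = ((2 : ℝ) ^ p) ^ k := by
      rw [← rpow_natCast, ← rpow_natCast, ← rpow_mul, ← rpow_mul, mul_comm] <;> norm_num

/-- For `N ~ Poisson(u)`, `∑' k, poissonMomentTerm p u k = e^u · E[N^p; N ≥ 1]`. -/
noncomputable def poissonMomentTerm (p u : ℝ) (k : ℕ) : ℝ :=
  if 1 ≤ k then (k : ℝ) ^ p * u ^ k / k ! else 0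

section poissonMomentTerm

variable {p u : ℝ}

lemma poissonMomentTerm_nonneg (hu : 0 ≤ u) (k : ℕ) : 0 ≤ poissonMomentTerm p u k := by
  unfold poissonMomentTerm
  split_ifs <;> positivity

lemma poissonMomentTerm_one : poissonMomentTerm p u 1 = u := by
  simp [poissonMomentTerm]

lemma poissonMomentTerm_le (hp : 0 ≤ p) (hu : 0 ≤ u) (k : ℕ) :
    poissonMomentTerm p u k ≤ (2 ^ p) ^ k * u ^ k / k ! := by
  unfold poissonMomentTerm
  split_ifs
  · gcongr
    exact natCast_rpow_le_two_rpow_pow hp k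
  · positivity

lemma summable_poissonMomentTerm (hp : 0 ≤ p) (hu : 0 ≤ u) : Summable (poissonMomentTerm p u) :=
  .of_nonneg_of_le (poissonMomentTerm_nonneg hu) (poissonMomentTerm_le hp hu)
    (by simpa only [mul_pow] using summable_pow_div_factorial (2 ^ p * u))

lemma poissonMomentTerm_le_of_le_one (hp : 0 ≤ p) (hu₀ : 0 ≤ u) (hu₁ : u ≤ 1) (k : ℕ) :
    poissonMomentTerm p u k ≤ (if k = 1 then u else 0) + u ^ 2 * ((2 ^ p) ^ k / k !) := by
  rcases k with _ | _ | k
  · simp only [poissonMomentTerm, if_false, zero_ne_one, zero_add]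
    positivity
  · rw [poissonMomentTerm_one, if_pos rfl]
    have : 0 ≤ u ^ 2 * ((2 ^ p) ^ 1 / (1 : ℕ)!) := by positivity
    linarith
  · calc poissonMomentTerm p u (k + 2) ≤ (2 ^ p) ^ (k + 2) * u ^ (k + 2) / (k + 2)! :=
          poissonMomentTerm_le hp hu₀ _
      _ ≤ (2 ^ p) ^ (k + 2) * u ^ 2 / (k + 2)! := by
          gcongr (2 ^ p) ^ (k + 2) * ?_ / _
          exact pow_le_pow_of_le_one hu₀ hu₁ (by omega : 2 ≤ k + 2)
      _ = (if k + 2 = 1 then u else 0) + u ^ 2 * ((2 ^ p) ^ (k + 2) / (k + 2)!) := by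
          rw [if_neg (by omega)]
          ring

lemma le_tsum_poissonMomentTerm (hp : 0 ≤ p) (hu : 0 ≤ u) : u ≤ ∑' k, poissonMomentTerm p u k :=
  calc u = poissonMomentTerm p u 1 := poissonMomentTerm_one.symm
    _ ≤ ∑' k, poissonMomentTerm p u k :=
      (summable_poissonMomentTerm hp hu).le_tsum 1 fun k _ ↦ poissonMomentTerm_nonneg hu k

lemma tsum_poissonMomentTerm_le (hp : 0 ≤ p) (hu₀ : 0 ≤ u) (hu₁ : u ≤ 1) :
    ∑' k, poissonMomentTerm p u k ≤ u + u ^ 2 * exp (2 ^ p) := by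
  have hexp : HasSum (fun k : ℕ ↦ ((2 : ℝ) ^ p) ^ k / k !) (exp (2 ^ p)) := by
    rw [exp_eq_exp_ℝ]
    exact NormedSpace.expSeries_div_hasSum_exp _
  exact hasSum_le (poissonMomentTerm_le_of_le_one hp hu₀ hu₁)
    (summable_poissonMomentTerm hp hu₀).hasSum ((hasSum_ite_eq 1 u).add (hexp.mul_left _))

theorem tendsto_tsum_poissonMomentTerm_div (hp : 0 ≤ p) :
    Tendsto (fun u ↦ (∑' k, poissonMomentTerm p u k) / u) (𝓝[>] 0) (𝓝 1) := by
  have hupper : Tendsto (fun u ↦ 1 + exp (2 ^ p) * u) (𝓝[>] 0) (𝓝 1) := by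
    have hcont : Continuous fun u : ℝ ↦ 1 + exp (2 ^ p) * u := by fun_prop
    exact (hcont.tendsto' 0 1 (by simp)).mono_left nhdsWithin_le_nhds
  refine tendsto_of_tendsto_of_tendsto_of_le_of_le' tendsto_const_nhds hupper ?_ ?_
  · filter_upwards [self_mem_nhdsWithin] with u (hu : 0 < u)
    rw [le_div_iff₀ hu, one_mul]
    exact le_tsum_poissonMomentTerm hp hu.le
  · filter_upwards [Ioc_mem_nhdsGT one_pos] with u ⟨hu₀, hu₁⟩
    rw [div_le_iff₀ hu₀]
    calc ∑' k, poissonMomentTerm p u k ≤ u + u ^ 2 * exp (2 ^ p) :=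
          tsum_poissonMomentTerm_le hp hu₀.le hu₁
      _ = (1 + exp (2 ^ p) * u) * u := by ring

end poissonMomentTerm

lemma tendsto_rpow_mul_nhdsGT_zero {α a : ℝ} (hα : 0 < α) (ha : 0 < a) :
    Tendsto (fun t : ℝ ↦ t ^ α * a) (𝓝[>] 0) (𝓝[>] 0) := by
  refine tendsto_nhdsWithin_iff.2 ⟨?_, ?_⟩
  · have := ((continuousAt_rpow_const 0 α (.inr hα.le)).tendsto.mul_const a).mono_left
      (nhdsWithin_le_nhds (s := Set.Ioi 0))
    simpa [zero_rpow hα.ne'] using this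
  · filter_upwards [self_mem_nhdsWithin] with t (ht : 0 < t)
    exact mul_pos (rpow_pos_of_pos ht α) ha

lemma exp_mul_rpow_rpow_mul_rpow_mul_pow {t : ℝ} (ht : 0 < t) (a c p δ : ℝ) (k : ℕ) :
    (exp c * t ^ (δ * k)) ^ p * (t ^ (1 - δ) * a) ^ k
      = exp (p * c) * (t ^ ((p - 1) * δ + 1) * a) ^ k := by
  rw [mul_rpow (exp_pos c).le (rpow_nonneg ht.le _), ← exp_mul, ← rpow_mul ht.le, mul_pow,
    mul_pow, ← rpow_mul_natCast ht.le, ← rpow_mul_natCast ht.le, mul_assoc, ← mul_assoc (t ^ _),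
    ← rpow_add ht, mul_comm c p]
  ring_nf

theorem poisson_is_moment_asymptotics_general
    (a p δ : ℝ) (ha : 0 < a) (hp : 1 ≤ p) (hδ0 : 0 ≤ δ) :
    Tendsto
      (fun t : ℝ =>
        (∑' k : ℕ,
            if 1 ≤ k then
              (k : ℝ) ^ p * (Real.exp ((t ^ (1 - δ) - t) * a) * t ^ (δ * (k : ℝ))) ^ p *
                (Real.exp (-(t ^ (1 - δ) * a)) * (t ^ (1 - δ) * a) ^ k / (Nat.factorial k : ℝ))
            else 0)
          / (t ^ ((p - 1) * δ + 1) * a * Real.exp (p * ((t ^ (1 - δ) - t) * a)) *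
              Real.exp (-(t ^ (1 - δ) * a))))
      (nhdsWithin 0 (Set.Ioi 0)) (nhds 1) := by
  have hrate := tendsto_rpow_mul_nhdsGT_zero (by nlinarith : 0 < (p - 1) * δ + 1) ha
  refine ((tendsto_tsum_poissonMomentTerm_div (p := p) (by linarith)).comp hrate).congr' ?_
  filter_upwards [self_mem_nhdsWithin] with t (ht : 0 < t)
  set u := t ^ ((p - 1) * δ + 1) * a
  set E := exp (p * ((t ^ (1 - δ) - t) * a)) * exp (-(t ^ (1 - δ) * a))
  have hsummand (k : ℕ) : (if 1 ≤ k then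
      (k : ℝ) ^ p * (exp ((t ^ (1 - δ) - t) * a) * t ^ (δ * (k : ℝ))) ^ p *
        (exp (-(t ^ (1 - δ) * a)) * (t ^ (1 - δ) * a) ^ k / (k ! : ℝ)) else 0)
      = E * poissonMomentTerm p u k := by
    unfold poissonMomentTerm
    split_ifs
    · have := exp_mul_rpow_rpow_mul_rpow_mul_pow ht a ((t ^ (1 - δ) - t) * a) p δ k
      linear_combination (k : ℝ) ^ p * exp (-(t ^ (1 - δ) * a)) / k ! * this
    · simp
  simp only [Function.comp_apply, tsum_congr hsummand, tsum_mul_left]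
  rw [show u * exp (p * ((t ^ (1 - δ) - t) * a)) * exp (-(t ^ (1 - δ) * a)) = E * u by ring,
    mul_div_mul_left _ _ (by positivity)]

/-- Single-step Poisson importance sampling computation at the heart of
Lemma 5.1: for `N_t ~ Poisson(t^(1-δ)·a)` and likelihood ratio
`L_t = e^((t^(1-δ)-t)·a) · t^(δ·N_t)`, the moment `E[N_t^p L_t^p 1_{N_t ≥ 1}]`
(written as the sum over the Poisson distribution) is asymptotically
`t^((p-1)δ+1) · a · e^(p(t^(1-δ)-t)·a) · e^(-t^(1-δ)·a)` as `t → 0⁺`. -/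
theorem poisson_is_moment_asymptotics
    (a p δ : ℝ) (ha : 0 < a) (hp : 1 ≤ p) (hδ0 : 0 ≤ δ) (hδ1 : δ < 1) :
    Tendsto
      (fun t : ℝ =>
        (∑' k : ℕ,
            if 1 ≤ k then
              (k : ℝ) ^ p * (Real.exp ((t ^ (1 - δ) - t) * a) * t ^ (δ * (k : ℝ))) ^ p *
                (Real.exp (-(t ^ (1 - δ) * a)) * (t ^ (1 - δ) * a) ^ k / (Nat.factorial k : ℝ))
            else 0)
          / (t ^ ((p - 1) * δ + 1) * a * Real.exp (p * ((t ^ (1 - δ) - t) * a)) *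
              Real.exp (-(t ^ (1 - δ) * a))))
      (nhdsWithin 0 (Set.Ioi 0)) (nhds 1) :=
  poisson_is_moment_asymptotics_general a p δ ha hp hδ0
end
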